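/- Let S be a fundamental Boolean inverse ∧-monoid satisfying axioms (F1), (F2) and (F3), and let t be a non-trivial involution in S. Then W_t = U(σ(t)), where U(σ(t)) = {g ∈ U(S) : σ(g) ≤ σ(t)}. -/

import Mathlib

universe u

/-- An inverse monoid with zero: every element `a` has a unique generalized
inverse `a⁻¹`, and `0` is an absorbing element. -/
class InverseMonoidWithZero (S : Type u) extends Monoid S, Zero S, Inv S where
  zero_mul' : ∀ a : S, 0 * a = 0
  mul_zero' : ∀ a : S, a * 0 = 0
  mul_inv_mul : ∀ a : S, a * a⁻¹ * a = a
  inv_mul_inv : ∀ a : S, a⁻¹ * a * a⁻¹ = a⁻¹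
  inv_unique : ∀ a b : S, a * b * a = a → b * a * b = b → b = a⁻¹

section BasicDefs

variable {S : Type u}

/-- The natural partial order: `a ≤ b` iff `a = e * b` for some idempotent `e`. -/
def nle [InverseMonoidWithZero S] (a b : S) : Prop :=
  ∃ e : S, e * e = e ∧ a = e * b

/-- `a` and `b` are compatible if `a * b⁻¹` and `a⁻¹ * b` are idempotents. -/
def Compat [InverseMonoidWithZero S] (a b : S) : Prop :=
  (a * b⁻¹) * (a * b⁻¹) = a * b⁻¹ ∧ (a⁻¹ * b) * (a⁻¹ * b) = a⁻¹ * b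

/-- `a` and `b` are orthogonal if `a * b⁻¹ = 0` and `a⁻¹ * b = 0`. -/
def Orth [InverseMonoidWithZero S] (a b : S) : Prop :=
  a * b⁻¹ = 0 ∧ a⁻¹ * b = 0

end BasicDefs

/-- A distributive inverse monoid: every compatible pair has a join (for the
natural partial order), recorded by `sup`, and multiplication distributes over
these binary joins. -/
class DistributiveInverseMonoid (S : Type u) extends InverseMonoidWithZero S where
  sup : S → S → S
  le_sup_left : ∀ a b : S, Compat a b → nle a (sup a b)
  le_sup_right : ∀ a b : S, Compat a b → nle b (sup a b)
  sup_le : ∀ a b c : S, Compat a b → nle a c → nle b c → nle (sup a b) c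
  mul_sup : ∀ a b c : S, Compat a b → c * sup a b = sup (c * a) (c * b)
  sup_mul : ∀ a b c : S, Compat a b → sup a b * c = sup (a * c) (b * c)

/-- A Boolean inverse monoid: a distributive inverse monoid whose idempotents
form a Boolean algebra under the natural partial order; `compl` records the
complementation on idempotents. -/
class BooleanInverseMonoid (S : Type u) extends DistributiveInverseMonoid S where
  compl : S → S
  compl_idem : ∀ e : S, e * e = e → compl e * compl e = compl e
  mul_compl : ∀ e : S, e * e = e → e * compl e = 0
  sup_compl : ∀ e : S, e * e = e → sup e (compl e) = 1

/-- A Boolean inverse ∧-monoid: a Boolean inverse monoid in which every pair of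
elements has a meet with respect to the natural partial order. -/
class BooleanInverseMeetMonoid (S : Type u) extends BooleanInverseMonoid S where
  inf : S → S → S
  inf_le_left : ∀ a b : S, nle (inf a b) a
  inf_le_right : ∀ a b : S, nle (inf a b) b
  le_inf : ∀ a b c : S, nle c a → nle c b → nle c (inf a b)

section MoreDefs

variable {S : Type u}

/-- The join of a compatible pair. -/
def bsup [DistributiveInverseMonoid S] (a b : S) : S := DistributiveInverseMonoid.sup a b

/-- Complementation in the Boolean algebra of idempotents. -/
def bcompl [BooleanInverseMonoid S] (e : S) : S := BooleanInverseMonoid.compl e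

/-- The binary meet. -/
def binf [BooleanInverseMeetMonoid S] (a b : S) : S := BooleanInverseMeetMonoid.inf a b

/-- The fixed-point operator `φ(s) = s ∧ 1`. -/
def phi [BooleanInverseMeetMonoid S] (s : S) : S := binf s 1

/-- The support operator `σ(s) = \overline{φ(s)} ⋅ s⁻¹ s`. -/
def sigma [BooleanInverseMeetMonoid S] (s : S) : S := bcompl (phi s) * (s⁻¹ * s)

/-- An infinitesimal is a non-zero element that squares to zero. -/
def Infinitesimal [InverseMonoidWithZero S] (a : S) : Prop := a ≠ 0 ∧ a * a = 0

/-- A (two-sided) ideal. -/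
def IsMIdeal [InverseMonoidWithZero S] (I : Set S) : Prop :=
  I.Nonempty ∧ ∀ a ∈ I, ∀ s : S, s * a ∈ I ∧ a * s ∈ I

/-- A ∨-ideal: an ideal closed under joins of compatible pairs. -/
def IsVIdeal [DistributiveInverseMonoid S] (I : Set S) : Prop :=
  IsMIdeal I ∧ ∀ a ∈ I, ∀ b ∈ I, Compat a b → bsup a b ∈ I

end MoreDefs

/-- 0-simplifying: the only ∨-ideals are `{0}` and `S`. -/
def ZeroSimplifying (S : Type u) [DistributiveInverseMonoid S] : Prop :=
  ∀ I : Set S, IsVIdeal I → I = {0} ∨ I = Set.univ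

/-- 0-simple: non-trivial and the only ideals are `{0}` and `S`. -/
def ZeroSimple (S : Type u) [InverseMonoidWithZero S] : Prop :=
  (∃ s : S, s ≠ 0) ∧ ∀ I : Set S, IsMIdeal I → I = {0} ∨ I = Set.univ

/-- Fundamental: every element commuting with all idempotents is an idempotent. -/
def Fundamental (S : Type u) [InverseMonoidWithZero S] : Prop :=
  ∀ a : S, (∀ e : S, e * e = e → a * e = e * a) → a * a = a

/-- The Boolean algebra of idempotents is atomless. -/
def IdemAtomless (S : Type u) [InverseMonoidWithZero S] : Prop :=
  ∀ e : S, e * e = e → e ≠ 0 → ∃ f : S, f * f = f ∧ f ≠ 0 ∧ nle f e ∧ f ≠ e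

section Filters

variable {S : Type u}

/-- A filter in a Boolean inverse ∧-monoid: a nonempty subset closed under
binary meets and upward closed in the natural partial order. -/
def IsMFilter [BooleanInverseMeetMonoid S] (A : Set S) : Prop :=
  A.Nonempty ∧ (∀ a ∈ A, ∀ b ∈ A, binf a b ∈ A) ∧ ∀ a ∈ A, ∀ b : S, nle a b → b ∈ A

/-- An ultrafilter: a maximal proper filter. -/
def IsMUltrafilter [BooleanInverseMeetMonoid S] (A : Set S) : Prop :=
  IsMFilter A ∧ (0 : S) ∉ A ∧ ∀ B : Set S, IsMFilter B → (0 : S) ∉ B → A ⊆ B → A = B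

/-- A filter of the Boolean algebra of idempotents (meet of idempotents is
their product). -/
def IsIdemFilter [InverseMonoidWithZero S] (F : Set S) : Prop :=
  F.Nonempty ∧ (∀ e ∈ F, e * e = e) ∧ (∀ e ∈ F, ∀ f ∈ F, e * f ∈ F) ∧
    ∀ e ∈ F, ∀ f : S, f * f = f → nle e f → f ∈ F

/-- An ultrafilter of the Boolean algebra of idempotents. -/
def IsIdemUltrafilter [InverseMonoidWithZero S] (F : Set S) : Prop :=
  IsIdemFilter F ∧ (0 : S) ∉ F ∧
    ∀ G : Set S, IsIdemFilter G → (0 : S) ∉ G → F ⊆ G → F = G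

end Filters

section PencilDefs

variable {S : Type u}

/-- `Preceq e f`: there is a pencil from `e` to `f`, i.e. finitely many
elements `x₁, …, xₘ` with `r(xᵢ) ≤ f` for all `i` and `e = ⋁ d(xᵢ)`
(a least upper bound for the natural partial order). -/
def Preceq [DistributiveInverseMonoid S] (e f : S) : Prop :=
  ∃ l : List S, l ≠ [] ∧ (∀ x ∈ l, nle (x * x⁻¹) f) ∧
    (∀ x ∈ l, nle (x⁻¹ * x) e) ∧ ∀ c : S, (∀ x ∈ l, nle (x⁻¹ * x) c) → nle e c

/-- Piecewise factorizable: every element is a finite join of elements each of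
which lies beneath a unit. -/
def PiecewiseFactorizable (S : Type u) [DistributiveInverseMonoid S] : Prop :=
  ∀ s : S, ∃ l : List S, l ≠ [] ∧ (∀ x ∈ l, ∃ g : S, IsUnit g ∧ nle x g) ∧
    (∀ x ∈ l, nle x s) ∧ ∀ c : S, (∀ x ∈ l, nle x c) → nle s c

/-- A properly infinite idempotent. -/
def ProperlyInfinite [DistributiveInverseMonoid S] (e : S) : Prop :=
  ∃ x y : S, x⁻¹ * x = e ∧ y⁻¹ * y = e ∧ Orth (x * x⁻¹) (y * y⁻¹) ∧
    nle (bsup (x * x⁻¹) (y * y⁻¹)) e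

end PencilDefs

/-- Purely infinite: every non-zero idempotent is properly infinite. -/
def PurelyInfinite (S : Type u) [DistributiveInverseMonoid S] : Prop :=
  ∀ e : S, e * e = e → e ≠ 0 → ProperlyInfinite e

section Statement19

variable {S : Type u}

/-- Conjugation of a set of idempotents by an element. -/
def conjSet [InverseMonoidWithZero S] (g : S) (F : Set S) : Set S :=
  (fun f => g * f * g⁻¹) '' F

/-- Axiom (F1): enough involutions. -/
def AxF1 (S : Type u) [BooleanInverseMeetMonoid S] : Prop :=
  ∀ F : Set S, IsIdemUltrafilter F → ∀ e ∈ F,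
    ∃ t : S, IsUnit t ∧ t * t = 1 ∧ t ≠ 1 ∧ sigma t ∈ F ∧ nle (sigma t) e

/-- Axiom (F2): shrinking. -/
def AxF2 (S : Type u) [BooleanInverseMeetMonoid S] : Prop :=
  ∀ t : S, IsUnit t → t * t = 1 → t ≠ 1 →
    ∀ e : S, e * e = e → e ≠ 0 → nle e (sigma t) →
      ∃ g : S, IsUnit g ∧ g ≠ 1 ∧ nle (sigma g) (bsup e (t * e * t)) ∧
        ∀ F : Set S, IsIdemUltrafilter F → sigma g ∈ F →
          conjSet g F = (fun f => t * f * t) '' F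

/-- Axiom (F3): enough non-involutions. -/
def AxF3 (S : Type u) [BooleanInverseMeetMonoid S] : Prop :=
  ∀ e : S, e * e = e → e ≠ 0 → ∃ g : S, IsUnit g ∧ g * g ≠ 1 ∧ nle (sigma g) e

/-- `C_t`: the centralizer of `t` in the group of units. -/
def Cset [BooleanInverseMeetMonoid S] (t : S) : Set S :=
  {a : S | IsUnit a ∧ a * t = t * a}

/-- `Z_t = {s ∈ C_t : s² = 1, [s, a s a⁻¹] = 1 for all a ∈ C_t}`. -/
def Zset [BooleanInverseMeetMonoid S] (t : S) : Set S :=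
  {s : S | s ∈ Cset t ∧ s * s = 1 ∧
    ∀ a ∈ Cset t, s * (a * s * a⁻¹) = (a * s * a⁻¹) * s}

/-- `S_t = {a² : a ∈ U(S), [a, s] = 1 for all s ∈ Z_t}`. -/
def Sset [BooleanInverseMeetMonoid S] (t : S) : Set S :=
  {b : S | ∃ a : S, IsUnit a ∧ b = a * a ∧ ∀ s ∈ Zset t, a * s = s * a}

/-- `W_t = {a ∈ U(S) : [a, b] = 1 for all b ∈ S_t}`. -/
def Wset [BooleanInverseMeetMonoid S] (t : S) : Set S :=
  {a : S | IsUnit a ∧ ∀ b ∈ Sset t, a * b = b * a}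

/-!
The support `σ(g)` of a unit is the complement of its fixed-point set `φ(g)`, and units with
disjoint supports commute. Fundamentality enters through one fact: no unit `g` fixes every
idempotent below a non-zero `e ≤ σ(g)`, so some non-zero `f ≤ e` is disjoint from `g f g⁻¹`.

`U(σ(t)) ⊆ W_t`: a unit `a` commuting with `Z_t` commutes with `t` and with the involutions
`te ∨ ē` for `t`-invariant `e ≤ σ(t)`, which lie in `Z_t`. Hence `a` fixes every `t`-invariant
idempotent below `σ(t)`, so `a²` fixes every idempotent below `σ(t)`, i.e. `σ(a²)` is disjoint
from `σ(t)`; thus the elements of `S_t` commute with every unit supported in `σ(t)`.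

`W_t ⊆ U(σ(t))`: if the support of `a ∈ W_t` met `φ(t)`, take a non-zero piece `f ≤ σ(a) φ(t)`
disjoint from `a f a⁻¹` and, by (F3), a unit `h` with `h² ≠ 1` supported in `f`. The elements
of `Z_t` are supported in `σ(t)` (by the same argument), so `h` commutes with `Z_t`, `h² ∈ S_t`
commutes with `a`, and `σ(h²) ≤ f · a f a⁻¹ = 0`, a contradiction.
-/

namespace InverseMonoidWithZero

section InverseMonoid

variable {S : Type u} [InverseMonoidWithZero S]

theorem inv_inv (a : S) : a⁻¹⁻¹ = a :=
  (inv_unique _ _ (inv_mul_inv a) (mul_inv_mul a)).symm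

theorem inv_eq_of_mul_eq_one {g u : S} (h₁ : g * u = 1) (h₂ : u * g = 1) : g⁻¹ = u :=
  (inv_unique g u (by rw [h₁, one_mul]) (by rw [h₂, one_mul])).symm

theorem _root_.IsIdempotentElem.inv_eq_self {e : S} (he : IsIdempotentElem e) : e⁻¹ = e :=
  (inv_unique e e (by rw [he.eq, he.eq]) (by rw [he.eq, he.eq])).symm

theorem isIdempotentElem_mul_inv (a : S) : IsIdempotentElem (a * a⁻¹) := by
  rw [IsIdempotentElem, mul_assoc, ← mul_assoc a⁻¹, inv_mul_inv]

theorem isIdempotentElem_inv_mul (a : S) : IsIdempotentElem (a⁻¹ * a) := by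
  rw [IsIdempotentElem, mul_assoc, ← mul_assoc a, mul_inv_mul]

theorem isIdempotentElem_zero : IsIdempotentElem (0 : S) := zero_mul' 0

theorem inv_zero : (0 : S)⁻¹ = 0 := isIdempotentElem_zero.inv_eq_self

/-- `f (ef)⁻¹ e` is another inverse of `ef`, so by uniqueness it is `(ef)⁻¹`, which is then an
idempotent and hence equal to its inverse `ef`. -/
theorem isIdempotentElem_mul {e f : S} (he : IsIdempotentElem e) (hf : IsIdempotentElem f) :
    IsIdempotentElem (e * f) := by
  have h₁ : e * f * (f * (e * f)⁻¹ * e) * (e * f) = e * f := by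
    calc e * f * (f * (e * f)⁻¹ * e) * (e * f) = e * (f * f) * (e * f)⁻¹ * ((e * e) * f) := by
          simp only [mul_assoc]
      _ = e * f := by rw [hf.eq, he.eq, mul_inv_mul]
  have h₂ : f * (e * f)⁻¹ * e * (e * f) * (f * (e * f)⁻¹ * e) = f * (e * f)⁻¹ * e := by
    calc f * (e * f)⁻¹ * e * (e * f) * (f * (e * f)⁻¹ * e)
          = f * ((e * f)⁻¹ * ((e * e) * (f * f)) * (e * f)⁻¹) * e := by simp only [mul_assoc]
      _ = f * (e * f)⁻¹ * e := by rw [he.eq, hf.eq, inv_mul_inv, mul_assoc]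
  have hfxe : f * (e * f)⁻¹ * e = (e * f)⁻¹ := inv_unique _ _ h₁ h₂
  have hx : IsIdempotentElem (e * f)⁻¹ := by
    calc (e * f)⁻¹ * (e * f)⁻¹ = (f * (e * f)⁻¹ * e) * (f * (e * f)⁻¹ * e) := by rw [hfxe]
      _ = f * ((e * f)⁻¹ * (e * f) * (e * f)⁻¹) * e := by simp only [mul_assoc]
      _ = (e * f)⁻¹ := by rw [inv_mul_inv, hfxe]
  have hex : e * f = (e * f)⁻¹ := by
    calc e * f = (e * f)⁻¹⁻¹ := (inv_inv _).symm
      _ = (e * f)⁻¹ := hx.inv_eq_self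
  rw [IsIdempotentElem, hex]
  exact hx

theorem _root_.IsIdempotentElem.commute {e f : S} (he : IsIdempotentElem e)
    (hf : IsIdempotentElem f) : Commute e f := by
  have hef := isIdempotentElem_mul he hf
  have hfe := isIdempotentElem_mul hf he
  have h₁ : e * f * (f * e) * (e * f) = e * f := by
    calc e * f * (f * e) * (e * f) = e * ((f * f) * ((e * e) * f)) := by simp only [mul_assoc]
      _ = e * f := by rw [hf.eq, he.eq, ← mul_assoc, hef.eq]
  have h₂ : f * e * (e * f) * (f * e) = f * e := by
    calc f * e * (e * f) * (f * e) = f * ((e * e) * ((f * f) * e)) := by simp only [mul_assoc]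
      _ = f * e := by rw [hf.eq, he.eq, ← mul_assoc, hfe.eq]
  rw [Commute, SemiconjBy, inv_unique _ _ h₁ h₂, hef.inv_eq_self]

theorem mul_inv_rev (a b : S) : (a * b)⁻¹ = b⁻¹ * a⁻¹ := by
  have hc := (isIdempotentElem_mul_inv b).commute (isIdempotentElem_inv_mul a)
  refine (inv_unique _ _ ?_ ?_).symm
  · calc a * b * (b⁻¹ * a⁻¹) * (a * b) = a * ((b * b⁻¹) * (a⁻¹ * a)) * b := by
          simp only [mul_assoc]
      _ = (a * a⁻¹ * a) * (b * b⁻¹ * b) := by rw [hc.eq]; simp only [mul_assoc]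
      _ = a * b := by rw [mul_inv_mul, mul_inv_mul]
  · calc b⁻¹ * a⁻¹ * (a * b) * (b⁻¹ * a⁻¹) = b⁻¹ * ((a⁻¹ * a) * (b * b⁻¹)) * a⁻¹ := by
          simp only [mul_assoc]
      _ = (b⁻¹ * b * b⁻¹) * (a⁻¹ * a * a⁻¹) := by rw [← hc.eq]; simp only [mul_assoc]
      _ = b⁻¹ * a⁻¹ := by rw [inv_mul_inv, inv_mul_inv]

theorem _root_.IsIdempotentElem.conj {e : S} (he : IsIdempotentElem e) (g : S) :
    IsIdempotentElem (g * e * g⁻¹) := by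
  have hc := he.commute (isIdempotentElem_inv_mul g)
  calc g * e * g⁻¹ * (g * e * g⁻¹) = g * (e * (g⁻¹ * g)) * (e * g⁻¹) := by simp only [mul_assoc]
    _ = (g * g⁻¹ * g) * (e * e) * g⁻¹ := by rw [hc.eq]; simp only [mul_assoc]
    _ = g * e * g⁻¹ := by rw [mul_inv_mul, he.eq]

theorem _root_.IsIdempotentElem.conj_inv {e : S} (he : IsIdempotentElem e) (g : S) :
    IsIdempotentElem (g⁻¹ * e * g) := by
  simpa only [inv_inv] using he.conj g⁻¹

end InverseMonoid

section NaturalOrder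

variable {S : Type u} [InverseMonoidWithZero S]

theorem nle_refl (a : S) : nle a a := ⟨a * a⁻¹, isIdempotentElem_mul_inv a, (mul_inv_mul a).symm⟩

theorem zero_nle (a : S) : nle 0 a := ⟨0, isIdempotentElem_zero, (zero_mul' a).symm⟩

theorem eq_zero_of_nle_zero {a : S} (h : nle a 0) : a = 0 := by
  obtain ⟨e, -, rfl⟩ := h
  exact mul_zero' e

theorem nle_trans {a b c : S} (hab : nle a b) (hbc : nle b c) : nle a c := by
  obtain ⟨e, he, rfl⟩ := hab
  obtain ⟨f, hf, rfl⟩ := hbc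
  exact ⟨e * f, isIdempotentElem_mul he hf, (mul_assoc e f c).symm⟩

theorem eq_mul_inv_mul_of_nle {a b : S} (h : nle a b) : a = a * a⁻¹ * b := by
  obtain ⟨e, (he : IsIdempotentElem e), rfl⟩ := h
  have hc := he.commute (isIdempotentElem_mul_inv b)
  rw [mul_inv_rev, he.inv_eq_self]
  calc e * b = e * ((b * b⁻¹) * e) * b := by
        rw [← hc.eq, ← mul_assoc, he.eq, mul_assoc, mul_inv_mul]
    _ = e * b * (b⁻¹ * e) * b := by simp only [mul_assoc]

theorem nle_antisymm {a b : S} (hab : nle a b) (hba : nle b a) : a = b := by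
  have ha := eq_mul_inv_mul_of_nle hab
  have hb := eq_mul_inv_mul_of_nle hba
  have hc := (isIdempotentElem_mul_inv a).commute (isIdempotentElem_mul_inv b)
  have key : ∀ {x y : S}, x = x * x⁻¹ * y → x * x⁻¹ = x * x⁻¹ * (y * y⁻¹) := fun {x y} hx => by
    calc x * x⁻¹ = x * x⁻¹ * y * (x * x⁻¹ * y)⁻¹ := by rw [← hx]
      _ = x * x⁻¹ * (y * y⁻¹) * (x * x⁻¹) := by
          rw [mul_inv_rev, (isIdempotentElem_mul_inv x).inv_eq_self]; simp only [mul_assoc]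
      _ = x * x⁻¹ * (y * y⁻¹) := by
          rw [((isIdempotentElem_mul_inv x).commute (isIdempotentElem_mul_inv y)).eq, mul_assoc,
            (isIdempotentElem_mul_inv x).eq]
  have hab' : a * a⁻¹ = b * b⁻¹ := by rw [key ha, hc.eq, ← key hb]
  rw [ha, hab', mul_inv_mul]

theorem nle_mul_left {a b : S} (c : S) (h : nle a b) : nle (c * a) (c * b) := by
  obtain ⟨e, (he : IsIdempotentElem e), rfl⟩ := h
  refine ⟨c * e * c⁻¹, he.conj c, ?_⟩
  calc c * (e * b) = (c * c⁻¹ * c) * (e * b) := by rw [mul_inv_mul]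
    _ = c * ((c⁻¹ * c) * e) * b := by simp only [mul_assoc]
    _ = c * e * c⁻¹ * (c * b) := by
        rw [((isIdempotentElem_inv_mul c).commute he).eq]; simp only [mul_assoc]

theorem nle_mul_right {a b : S} (h : nle a b) (c : S) : nle (a * c) (b * c) := by
  obtain ⟨e, he, rfl⟩ := h
  exact ⟨e, he, mul_assoc e b c⟩

theorem nle_inv {a b : S} (h : nle a b) : nle a⁻¹ b⁻¹ := by
  obtain ⟨e, (he : IsIdempotentElem e), rfl⟩ := h
  rw [mul_inv_rev, he.inv_eq_self]
  refine ⟨b⁻¹ * e * b, he.conj_inv b, ?_⟩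
  calc b⁻¹ * e = b⁻¹ * b * b⁻¹ * e := by rw [inv_mul_inv]
    _ = b⁻¹ * ((b * b⁻¹) * e) := by simp only [mul_assoc]
    _ = b⁻¹ * e * b * b⁻¹ := by
        rw [((isIdempotentElem_mul_inv b).commute he).eq]; simp only [mul_assoc]

theorem nle_mul_mul {a b c d : S} (hab : nle a b) (hcd : nle c d) : nle (a * c) (b * d) :=
  nle_trans (nle_mul_right hab c) (nle_mul_left b hcd)

theorem nle_conj {a b : S} (h : nle a b) (g : S) : nle (g * a * g⁻¹) (g * b * g⁻¹) :=
  nle_mul_right (nle_mul_left g h) g⁻¹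

theorem nle_one_iff {a : S} : nle a 1 ↔ IsIdempotentElem a := by
  refine ⟨?_, fun ha => ⟨a, ha, (mul_one a).symm⟩⟩
  rintro ⟨e, he, rfl⟩
  rwa [mul_one]

theorem nle_iff_mul_eq {e f : S} (he : IsIdempotentElem e) (hf : IsIdempotentElem f) :
    nle e f ↔ e * f = e := by
  refine ⟨?_, fun h => ⟨e, he, h.symm⟩⟩
  rintro ⟨e', -, rfl⟩
  rw [mul_assoc, hf.eq]

theorem mul_nle_left {e f : S} (he : IsIdempotentElem e) (hf : IsIdempotentElem f) :
    nle (e * f) e := by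
  rw [(he.commute hf).eq]
  exact ⟨f, hf, rfl⟩

theorem mul_nle_right {e : S} (he : IsIdempotentElem e) (f : S) : nle (e * f) f := ⟨e, he, rfl⟩

theorem nle_mul {x e f : S} (hx : IsIdempotentElem x) (he : IsIdempotentElem e)
    (hf : IsIdempotentElem f) (hxe : nle x e) (hxf : nle x f) : nle x (e * f) := by
  rw [nle_iff_mul_eq hx he] at hxe
  rw [nle_iff_mul_eq hx hf] at hxf
  exact ⟨x, hx, by rw [← mul_assoc, hxe, hxf]⟩

theorem mul_eq_self_of_nle {e g : S} (he : IsIdempotentElem e) (h : nle e g) :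
    g * e = e ∧ e * g = e := by
  have hr : e * g = e := by
    have h' := eq_mul_inv_mul_of_nle h
    rw [he.inv_eq_self, he.eq] at h'
    exact h'.symm
  have hl : e * g⁻¹ = e := by
    have h' := eq_mul_inv_mul_of_nle (nle_inv h)
    simp only [he.inv_eq_self, he.eq] at h'
    exact h'.symm
  refine ⟨?_, hr⟩
  calc g * e = (e * g⁻¹)⁻¹ := by rw [mul_inv_rev, inv_inv, he.inv_eq_self]
    _ = e := by rw [hl, he.inv_eq_self]

end NaturalOrder

section Units

variable {S : Type u} [InverseMonoidWithZero S] {g x : S}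

theorem mul_inv_of_isUnit (hg : IsUnit g) : g * g⁻¹ = 1 := by
  obtain ⟨u, hgu, hug⟩ := isUnit_iff_exists.mp hg
  rw [inv_eq_of_mul_eq_one hgu hug, hgu]

theorem inv_mul_of_isUnit (hg : IsUnit g) : g⁻¹ * g = 1 := by
  obtain ⟨u, hgu, hug⟩ := isUnit_iff_exists.mp hg
  rw [inv_eq_of_mul_eq_one hgu hug, hug]

theorem isUnit_inv (hg : IsUnit g) : IsUnit g⁻¹ :=
  isUnit_iff_exists.mpr ⟨g, inv_mul_of_isUnit hg, mul_inv_of_isUnit hg⟩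

theorem conj_mul_conj (hg : IsUnit g) (x y : S) :
    g * x * g⁻¹ * (g * y * g⁻¹) = g * (x * y) * g⁻¹ := by
  calc g * x * g⁻¹ * (g * y * g⁻¹) = g * x * (g⁻¹ * g) * y * g⁻¹ := by simp only [mul_assoc]
    _ = g * (x * y) * g⁻¹ := by rw [inv_mul_of_isUnit hg, mul_one, mul_assoc g x y]

theorem inv_conj_conj (hg : IsUnit g) (x : S) : g⁻¹ * (g * x * g⁻¹) * g = x := by
  calc g⁻¹ * (g * x * g⁻¹) * g = (g⁻¹ * g) * x * (g⁻¹ * g) := by simp only [mul_assoc]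
    _ = x := by rw [inv_mul_of_isUnit hg, one_mul, mul_one]

theorem conj_mul (g h x : S) : g * h * x * (g * h)⁻¹ = g * (h * x * h⁻¹) * g⁻¹ := by
  rw [mul_inv_rev]
  simp only [mul_assoc]

theorem inv_conj_of_commute (hg : IsUnit g) (h : Commute g x) : g⁻¹ * x * g = x := by
  rw [mul_assoc, ← h.eq, ← mul_assoc, inv_mul_of_isUnit hg, one_mul]

theorem conj_inv_conj (hg : IsUnit g) (x : S) : g * (g⁻¹ * x * g) * g⁻¹ = x := by
  calc g * (g⁻¹ * x * g) * g⁻¹ = (g * g⁻¹) * x * (g * g⁻¹) := by simp only [mul_assoc]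
    _ = x := by rw [mul_inv_of_isUnit hg, one_mul, mul_one]

theorem conj_eq_iff_commute (hg : IsUnit g) : g * x * g⁻¹ = x ↔ Commute g x := by
  constructor
  · intro h
    calc g * x = g * x * g⁻¹ * g := by rw [mul_assoc (g * x), inv_mul_of_isUnit hg, mul_one]
      _ = x * g := by rw [h]
  · intro h
    rw [h.eq, mul_assoc, mul_inv_of_isUnit hg, mul_one]

theorem _root_.Commute.inv_left_of_isUnit (h : Commute g x) (hg : IsUnit g) :
    Commute g⁻¹ x :=
  calc g⁻¹ * x = g⁻¹ * (x * g) * g⁻¹ := by rw [mul_assoc, mul_assoc, mul_inv_of_isUnit hg, mul_one]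
    _ = x * g⁻¹ := by rw [← h.eq, ← mul_assoc, inv_mul_of_isUnit hg, one_mul]

theorem eq_zero_of_conj_eq_zero (hg : IsUnit g) (h : g * x * g⁻¹ = 0) : x = 0 := by
  rw [← inv_conj_conj hg x, h, mul_zero', zero_mul']

theorem isUnit_conj (hg : IsUnit g) {a : S} (ha : IsUnit a) : IsUnit (g * a * g⁻¹) :=
  (hg.mul ha).mul (isUnit_inv hg)

theorem isUnit_of_mul_self_eq_one (hg : g * g = 1) : IsUnit g :=
  isUnit_iff_exists.mpr ⟨g, hg, hg⟩

end Units

section Involutions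

variable {S : Type u} [InverseMonoidWithZero S] {a g h s t x : S}

theorem conj_conj_of_mul_self_eq_one (ht : t * t = 1) (x : S) : t * (t * x * t⁻¹) * t⁻¹ = x := by
  rw [inv_eq_of_mul_eq_one ht ht]
  simp only [← mul_assoc]
  rw [ht, one_mul, mul_assoc, ht, mul_one]

theorem conj_conj_comm (hat : Commute a t) (x : S) :
    a * (t * x * t⁻¹) * a⁻¹ = t * (a * x * a⁻¹) * t⁻¹ := by
  have h : (a * t)⁻¹ = (t * a)⁻¹ := by rw [hat.eq]
  rw [mul_inv_rev, mul_inv_rev] at h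
  calc a * (t * x * t⁻¹) * a⁻¹ = a * t * x * (t⁻¹ * a⁻¹) := by simp only [mul_assoc]
    _ = t * (a * x * a⁻¹) * t⁻¹ := by rw [hat.eq, h]; simp only [mul_assoc]

theorem eq_zero_of_conj_nle_self {f : S} (hg : IsUnit g) (hx : IsIdempotentElem x)
    (hf : IsIdempotentElem f) (hxf : nle x f) (hfg : f * (g * f * g⁻¹) = 0)
    (hgx : nle (g * x * g⁻¹) x) : x = 0 := by
  refine eq_zero_of_conj_eq_zero hg (eq_zero_of_nle_zero ?_)
  rw [← hfg]
  exact nle_mul (hx.conj g) hf (hf.conj g) (nle_trans hgx hxf) (nle_conj hxf g)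

/-- With `k = s h s`: `(s · h s h⁻¹)² = 1` and `s h s h⁻¹ = k h⁻¹` with `k`, `h` commuting give
`k² = h²`, i.e. `s h² s = h²`. -/
theorem commute_mul_self_of_commute_conj (hs : s * s = 1) (hh : IsUnit h)
    (h₁ : Commute s (h * s * h⁻¹)) (h₂ : Commute h (s * h * s⁻¹)) : Commute s (h * h) := by
  rw [inv_eq_of_mul_eq_one hs hs] at h₂
  have hc : h * s * h⁻¹ * (h * s * h⁻¹) = 1 := by
    rw [conj_mul_conj hh, hs, mul_one, mul_inv_of_isUnit hh]
  have hk : s * h * s * h⁻¹ * (s * h * s * h⁻¹) = 1 := by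
    calc s * h * s * h⁻¹ * (s * h * s * h⁻¹) = s * ((h * s * h⁻¹) * s) * (h * s * h⁻¹) := by
          simp only [mul_assoc]
      _ = s * s * ((h * s * h⁻¹) * (h * s * h⁻¹)) := by rw [← h₁.eq]; simp only [mul_assoc]
      _ = 1 := by rw [hs, hc, one_mul]
  have hk' : s * h * s * h⁻¹ * (s * h * s * h⁻¹) = s * h * s * (s * h * s) * (h⁻¹ * h⁻¹) := by
    rw [mul_assoc (s * h * s) h⁻¹, ← mul_assoc h⁻¹ (s * h * s) h⁻¹,
      (h₂.inv_left_of_isUnit hh).eq]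
    simp only [mul_assoc]
  have hinv : h⁻¹ * h⁻¹ * (h * h) = 1 := by
    rw [mul_assoc, ← mul_assoc h⁻¹ h h, inv_mul_of_isUnit hh, one_mul, inv_mul_of_isUnit hh]
  have hkk : s * h * s * (s * h * s) = h * h := by
    calc s * h * s * (s * h * s) = s * h * s * (s * h * s) * (h⁻¹ * h⁻¹) * (h * h) := by
          rw [mul_assoc _ (h⁻¹ * h⁻¹), hinv, mul_one]
      _ = h * h := by rw [← hk', hk, one_mul]
  have hs' : ∀ x, s * (s * x) = x := fun x => by rw [← mul_assoc, hs, one_mul]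
  calc s * (h * h) = s * (s * h * s * (s * h * s)) := by rw [hkk]
    _ = h * h * s := by simp only [mul_assoc, hs']

end Involutions

section Distributive

variable {S : Type u} [DistributiveInverseMonoid S] {a b e f g x y : S}

theorem le_bsup_left (h : Compat a b) : nle a (bsup a b) :=
  DistributiveInverseMonoid.le_sup_left a b h

theorem le_bsup_right (h : Compat a b) : nle b (bsup a b) :=
  DistributiveInverseMonoid.le_sup_right a b h

theorem bsup_le (h : Compat a b) (hac : nle a x) (hbc : nle b x) : nle (bsup a b) x :=
  DistributiveInverseMonoid.sup_le a b x h hac hbc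

theorem mul_bsup (x : S) (h : Compat a b) : x * bsup a b = bsup (x * a) (x * b) :=
  DistributiveInverseMonoid.mul_sup a b x h

theorem bsup_mul (x : S) (h : Compat a b) : bsup a b * x = bsup (a * x) (b * x) :=
  DistributiveInverseMonoid.sup_mul a b x h

theorem compat_iff : Compat a b ↔ IsIdempotentElem (a * b⁻¹) ∧ IsIdempotentElem (a⁻¹ * b) :=
  Iff.rfl

theorem _root_.Compat.symm (h : Compat a b) : Compat b a := by
  have hba : b * a⁻¹ = (a * b⁻¹)⁻¹ := by rw [mul_inv_rev, inv_inv]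
  have hba' : b⁻¹ * a = (a⁻¹ * b)⁻¹ := by rw [mul_inv_rev, inv_inv]
  exact ⟨by rw [hba, IsIdempotentElem.inv_eq_self h.1]; exact h.1,
    by rw [hba', IsIdempotentElem.inv_eq_self h.2]; exact h.2⟩

theorem bsup_comm (h : Compat a b) : bsup a b = bsup b a :=
  nle_antisymm (bsup_le h (le_bsup_right h.symm) (le_bsup_left h.symm))
    (bsup_le h.symm (le_bsup_right h) (le_bsup_left h))

theorem _root_.Orth.compat (h : Orth a b) : Compat a b :=
  ⟨by rw [h.1]; exact isIdempotentElem_zero, by rw [h.2]; exact isIdempotentElem_zero⟩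

theorem compat_of_isIdempotentElem (he : IsIdempotentElem e) (hf : IsIdempotentElem f) :
    Compat e f := by
  rw [Compat, he.inv_eq_self, hf.inv_eq_self]
  exact ⟨isIdempotentElem_mul he hf, isIdempotentElem_mul he hf⟩

theorem bsup_zero (a : S) : bsup a 0 = a := by
  have h : Compat a 0 := Orth.compat ⟨by rw [inv_zero, mul_zero'], mul_zero' _⟩
  exact nle_antisymm (bsup_le h (nle_refl a) (zero_nle a)) (le_bsup_left h)

theorem zero_bsup (a : S) : bsup 0 a = a := by
  have h : Compat 0 a := Orth.compat ⟨zero_mul' _, by rw [inv_zero, zero_mul']⟩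
  exact nle_antisymm (bsup_le h (zero_nle a) (nle_refl a)) (le_bsup_right h)

theorem _root_.IsIdempotentElem.bsup (he : IsIdempotentElem e) (hf : IsIdempotentElem f) :
    IsIdempotentElem (bsup e f) := by
  rw [← nle_one_iff] at he hf ⊢
  exact bsup_le (compat_of_isIdempotentElem (nle_one_iff.mp he) (nle_one_iff.mp hf)) he hf

theorem _root_.Commute.bsup (ha : Commute x a) (hb : Commute x b) (h : Compat a b) :
    Commute x (bsup a b) := by
  rw [Commute, SemiconjBy, mul_bsup x h, bsup_mul x h, ha.eq, hb.eq]

theorem _root_.Compat.mul_left (hg : IsUnit g) (h : Compat x y) : Compat (g * x) (g * y) := by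
  rw [compat_iff] at h ⊢
  rw [mul_inv_rev, mul_inv_rev, ← mul_assoc, mul_assoc g x, mul_assoc x⁻¹,
    ← mul_assoc g⁻¹, inv_mul_of_isUnit hg, one_mul]
  exact ⟨h.1.conj g, h.2⟩

theorem conj_bsup (hg : IsUnit g) (h : Compat x y) :
    g * bsup x y * g⁻¹ = bsup (g * x * g⁻¹) (g * y * g⁻¹) := by
  rw [mul_bsup g h, bsup_mul g⁻¹ (h.mul_left hg)]

theorem nle_of_nle_bsup_of_mul_eq_zero {u w w' : S} (hy : IsIdempotentElem y)
    (hw : IsIdempotentElem w) (hw' : IsIdempotentElem w') (hyw : nle y (bsup w w'))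
    (hyu : nle y u) (huw' : u * w' = 0) : nle y w := by
  rw [nle_iff_mul_eq hy (hw.bsup hw')] at hyw
  have hyw' : y * w' = 0 := eq_zero_of_nle_zero (huw' ▸ nle_mul_right hyu w')
  rw [mul_bsup y (compat_of_isIdempotentElem hw hw'), hyw', bsup_zero] at hyw
  exact (nle_iff_mul_eq hy hw).mpr hyw

end Distributive

section Boolean

variable {S : Type u} [BooleanInverseMonoid S] {e f g x : S}

theorem _root_.IsIdempotentElem.bcompl (he : IsIdempotentElem e) : IsIdempotentElem (bcompl e) :=
  BooleanInverseMonoid.compl_idem e he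

theorem mul_bcompl (he : IsIdempotentElem e) : e * bcompl e = 0 :=
  BooleanInverseMonoid.mul_compl e he

theorem bcompl_mul (he : IsIdempotentElem e) : bcompl e * e = 0 := by
  rw [← (he.commute he.bcompl).eq, mul_bcompl he]

theorem bsup_bcompl (he : IsIdempotentElem e) : bsup e (bcompl e) = 1 :=
  BooleanInverseMonoid.sup_compl e he

theorem bsup_mul_mul_bcompl (he : IsIdempotentElem e) (x : S) :
    bsup (x * e) (x * bcompl e) = x := by
  rw [← mul_bsup x (compat_of_isIdempotentElem he he.bcompl), bsup_bcompl he, mul_one]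

theorem mul_eq_self_of_mul_bcompl_eq_zero (he : IsIdempotentElem e) (h : x * bcompl e = 0) :
    x * e = x := by
  conv_rhs => rw [← bsup_mul_mul_bcompl he x, h, bsup_zero]

theorem mul_bcompl_eq_self_of_mul_eq_zero (he : IsIdempotentElem e) (h : x * e = 0) :
    x * bcompl e = x := by
  conv_rhs => rw [← bsup_mul_mul_bcompl he x, h, zero_bsup]

theorem bcompl_unique (he : IsIdempotentElem e) (hx : IsIdempotentElem x) (hxe : x * e = 0)
    (hsup : bsup e x = 1) : bcompl e = x := by
  have hcx : bcompl e * x = bcompl e := by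
    have h := congrArg (bcompl e * ·) hsup
    simp only [mul_one] at h
    rwa [mul_bsup _ (compat_of_isIdempotentElem he hx), bcompl_mul he, zero_bsup] at h
  rw [← hcx, ← (hx.commute he.bcompl).eq, mul_bcompl_eq_self_of_mul_eq_zero he hxe]

theorem bcompl_bcompl (he : IsIdempotentElem e) : bcompl (bcompl e) = e :=
  bcompl_unique he.bcompl he (mul_bcompl he)
    (by rw [bsup_comm (compat_of_isIdempotentElem he.bcompl he), bsup_bcompl he])

theorem eq_one_of_bcompl_eq_zero (he : IsIdempotentElem e) (h : bcompl e = 0) : e = 1 := by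
  rw [← bsup_bcompl he, h, bsup_zero]

theorem bcompl_nle_bcompl (he : IsIdempotentElem e) (hf : IsIdempotentElem f) (h : nle e f) :
    nle (bcompl f) (bcompl e) := by
  rw [nle_iff_mul_eq he hf] at h
  rw [nle_iff_mul_eq hf.bcompl he.bcompl]
  refine mul_bcompl_eq_self_of_mul_eq_zero he ?_
  rw [← h, ← mul_assoc, (hf.bcompl.commute he).eq, mul_assoc, bcompl_mul hf, mul_zero']

theorem conj_bcompl (hg : IsUnit g) (he : IsIdempotentElem e) :
    g * bcompl e * g⁻¹ = bcompl (g * e * g⁻¹) := by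
  refine (bcompl_unique (he.conj g) (he.bcompl.conj g) ?_ ?_).symm
  · rw [conj_mul_conj hg, bcompl_mul he, mul_zero', zero_mul']
  · rw [← conj_bsup hg (compat_of_isIdempotentElem he he.bcompl), bsup_bcompl he, mul_one,
      mul_inv_of_isUnit hg]

theorem _root_.Commute.bcompl (h : Commute g e) (hg : IsUnit g) (he : IsIdempotentElem e) :
    Commute g (bcompl e) := by
  rw [← conj_eq_iff_commute hg, conj_bcompl hg he, (conj_eq_iff_commute hg).mpr h]

end Boolean

section Support

variable {S : Type u} [BooleanInverseMeetMonoid S] {a e g h : S}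

theorem phi_nle (s : S) : nle (phi s) s := BooleanInverseMeetMonoid.inf_le_left s 1

theorem isIdempotentElem_phi (s : S) : IsIdempotentElem (phi s) :=
  nle_one_iff.mp (BooleanInverseMeetMonoid.inf_le_right s 1)

theorem nle_phi {s : S} (he : IsIdempotentElem e) (h : nle e s) : nle e (phi s) :=
  BooleanInverseMeetMonoid.le_inf s 1 e h (nle_one_iff.mpr he)

theorem sigma_eq_bcompl_phi (hg : IsUnit g) : sigma g = bcompl (phi g) := by
  rw [sigma, inv_mul_of_isUnit hg, mul_one]

theorem isIdempotentElem_sigma (hg : IsUnit g) : IsIdempotentElem (sigma g) := by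
  rw [sigma_eq_bcompl_phi hg]
  exact (isIdempotentElem_phi g).bcompl

theorem phi_mul_sigma (hg : IsUnit g) : phi g * sigma g = 0 := by
  rw [sigma_eq_bcompl_phi hg, mul_bcompl (isIdempotentElem_phi g)]

theorem bcompl_sigma (hg : IsUnit g) : bcompl (sigma g) = phi g := by
  rw [sigma_eq_bcompl_phi hg, bcompl_bcompl (isIdempotentElem_phi g)]

theorem phi_conj (ha : IsUnit a) (g : S) : phi (a * g * a⁻¹) = a * phi g * a⁻¹ := by
  have hp := isIdempotentElem_phi (a * g * a⁻¹)
  refine nle_antisymm ?_ (nle_phi ((isIdempotentElem_phi g).conj a) (nle_conj (phi_nle g) a))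
  have h : nle (a⁻¹ * phi (a * g * a⁻¹) * a) g := by
    have h' := nle_conj (phi_nle (a * g * a⁻¹)) a⁻¹
    rwa [inv_inv, inv_conj_conj ha] at h'
  have h' := nle_conj (nle_phi (hp.conj_inv a) h) a
  rwa [conj_inv_conj ha] at h'

theorem sigma_conj (ha : IsUnit a) (hg : IsUnit g) :
    sigma (a * g * a⁻¹) = a * sigma g * a⁻¹ := by
  rw [sigma_eq_bcompl_phi (isUnit_conj ha hg), phi_conj ha,
    ← conj_bcompl ha (isIdempotentElem_phi g), ← sigma_eq_bcompl_phi hg]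

theorem commute_sigma (hg : IsUnit g) : Commute g (sigma g) := by
  have h := sigma_conj hg hg
  rw [mul_assoc g g, mul_inv_of_isUnit hg, mul_one] at h
  exact (conj_eq_iff_commute hg).mp h.symm

theorem eq_one_of_sigma_eq_zero (hg : IsUnit g) (h : sigma g = 0) : g = 1 := by
  rw [sigma_eq_bcompl_phi hg] at h
  have h1 : nle 1 g := by
    rw [← eq_one_of_bcompl_eq_zero (isIdempotentElem_phi g) h]
    exact phi_nle g
  rw [← mul_one g]
  exact (mul_eq_self_of_nle IsIdempotentElem.one h1).1

theorem sigma_mul_self_nle (hh : IsUnit h) : nle (sigma (h * h)) (sigma h) := by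
  have hφ := isIdempotentElem_phi h
  have h1 : nle (phi h) (h * h) := by
    rw [← hφ.eq]
    exact nle_trans (nle_mul_right (phi_nle h) _) (nle_mul_left h (phi_nle h))
  rw [sigma_eq_bcompl_phi hh, sigma_eq_bcompl_phi (hh.mul hh)]
  exact bcompl_nle_bcompl hφ (isIdempotentElem_phi _) (nle_phi hφ h1)

/-- `g` is the identity on `σ(h)`, so it fixes both pieces `h σ(h)` and `h φ(h) = φ(h)` of `h`. -/
theorem commute_of_sigma_mul_sigma_eq_zero (hg : IsUnit g) (hh : IsUnit h)
    (hgh : sigma g * sigma h = 0) : Commute g h := by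
  set q := sigma h
  have hq : IsIdempotentElem q := isIdempotentElem_sigma hh
  have hqφ : nle q (phi g) := by
    rw [← bcompl_sigma hg, nle_iff_mul_eq hq (isIdempotentElem_sigma hg).bcompl]
    refine mul_bcompl_eq_self_of_mul_eq_zero (isIdempotentElem_sigma hg) ?_
    rw [← (isIdempotentElem_sigma hg).commute hq, hgh]
  obtain ⟨hgq, hqg⟩ := mul_eq_self_of_nle hq (nle_trans hqφ (phi_nle g))
  have hqg' : q * g⁻¹ = q := by
    conv_lhs => rw [← hqg]
    rw [mul_assoc, mul_inv_of_isUnit hg, mul_one]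
  have hhq : Commute h q := commute_sigma hh
  have hhq' : h * bcompl q = bcompl q := by
    rw [bcompl_sigma hh]
    exact (mul_eq_self_of_nle (isIdempotentElem_phi h) (phi_nle h)).1
  have h1 : g * (h * q) * g⁻¹ = h * q := by
    rw [hhq.eq, ← mul_assoc, hgq, ← hhq.eq, mul_assoc, hqg']
  have h2 : g * bcompl q * g⁻¹ = bcompl q := by
    rw [conj_bcompl hg hq, (conj_eq_iff_commute hg).mpr (hgq.trans hqg.symm)]
  have hdec := bsup_mul_mul_bcompl hq h
  rw [← conj_eq_iff_commute hg]
  calc g * h * g⁻¹ = g * bsup (h * q) (h * bcompl q) * g⁻¹ := by rw [hdec]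
    _ = bsup (h * q) (h * bcompl q) := by
        rw [conj_bsup hg ((compat_of_isIdempotentElem hq hq.bcompl).mul_left hh), h1, hhq', h2]
    _ = h := hdec

end Support

section Fundamental

variable {S : Type u} [BooleanInverseMeetMonoid S] {e f g p : S}

/-- If `g` fixes every idempotent below `e`, then `g e ∨ ē` commutes with all idempotents, so in a
fundamental monoid it is an idempotent; this forces `g e = e`, i.e. `e ≤ φ(g)`. -/
theorem mul_sigma_eq_zero_of_forall_conj_eq (hfund : Fundamental S) (hg : IsUnit g)
    (he : IsIdempotentElem e)
    (hfix : ∀ f, IsIdempotentElem f → nle f e → g * f * g⁻¹ = f) : e * sigma g = 0 := by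
  have hge : Commute g e := (conj_eq_iff_commute hg).mp (hfix e he (nle_refl e))
  have hgē : Commute g⁻¹ (bcompl e) := (hge.bcompl hg he).inv_left_of_isUnit hg
  have hcompat : Compat (g * e) (bcompl e) := Orth.compat
    ⟨by rw [he.bcompl.inv_eq_self, mul_assoc, mul_bcompl he, mul_zero'],
      by rw [mul_inv_rev, he.inv_eq_self, mul_assoc, hgē.eq, ← mul_assoc, mul_bcompl he,
        zero_mul']⟩
  have hw : IsIdempotentElem (bsup (g * e) (bcompl e)) := by
    refine hfund _ fun x (hx : IsIdempotentElem x) => ?_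
    have hgx : Commute g (x * e) :=
      (conj_eq_iff_commute hg).mp (hfix _ (isIdempotentElem_mul hx he) (mul_nle_right hx e))
    have hgex : g * e * x = x * (g * e) := by
      calc g * e * x = g * (x * e) := by rw [mul_assoc, (he.commute hx).eq]
        _ = x * (e * g) := by rw [hgx.eq, mul_assoc]
        _ = x * (g * e) := by rw [hge.eq]
    rw [bsup_mul x hcompat, mul_bsup x hcompat, hgex, (he.bcompl.commute hx).eq]
  have hge_idem : IsIdempotentElem (g * e) := by
    have h := isIdempotentElem_mul hw he
    rwa [bsup_mul e hcompat, mul_assoc, he.eq, bcompl_mul he, bsup_zero] at h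
  have hgge : g * (g * e) = g * e := by
    calc g * (g * e) = g * (g * e * e) := by rw [mul_assoc g e e, he.eq]
      _ = g * e * (g * e) := by rw [mul_assoc g e (g * e), ← mul_assoc e g e, ← hge.eq]
      _ = g * e := hge_idem
  have hge_eq : g * e = e := by
    calc g * e = g⁻¹ * (g * (g * e)) := by rw [← mul_assoc, inv_mul_of_isUnit hg, one_mul]
      _ = e := by rw [hgge, ← mul_assoc, inv_mul_of_isUnit hg, one_mul]
  have heφ : nle e (phi g) := nle_phi he ⟨e, he, by rw [← hge.eq, hge_eq]⟩
  rw [← (nle_iff_mul_eq he (isIdempotentElem_phi g)).mp heφ, mul_assoc, phi_mul_sigma hg,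
    mul_zero']

/-- The idempotent `f · (g f g⁻¹)‾` is disjoint from its image under conjugation by `g`. -/
theorem nle_conj_of_forall_mul_conj_eq_zero
    (H : ∀ x, IsIdempotentElem x → nle x e → x * (g * x * g⁻¹) = 0 → x = 0)
    (hf : IsIdempotentElem f) (hfe : nle f e) : nle f (g * f * g⁻¹) := by
  have hc := hf.conj g
  have hx := isIdempotentElem_mul hf hc.bcompl
  have hxf : nle (f * bcompl (g * f * g⁻¹)) f := mul_nle_left hf hc.bcompl
  have hx0 : f * bcompl (g * f * g⁻¹) = 0 := by
    refine H _ hx (nle_trans hxf hfe) (eq_zero_of_nle_zero ?_)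
    rw [← bcompl_mul hc]
    exact nle_mul_mul (mul_nle_right hf _) (nle_conj hxf g)
  rw [nle_iff_mul_eq hf hc]
  exact mul_eq_self_of_mul_bcompl_eq_zero hc hx0

theorem exists_mul_conj_eq_zero (hfund : Fundamental S) (hg : IsUnit g)
    (he : IsIdempotentElem e) (he0 : e ≠ 0) (hle : nle e (sigma g)) :
    ∃ f, IsIdempotentElem f ∧ f ≠ 0 ∧ nle f e ∧ f * (g * f * g⁻¹) = 0 := by
  by_contra! H
  have H₁ : ∀ x, IsIdempotentElem x → nle x e → x * (g * x * g⁻¹) = 0 → x = 0 :=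
    fun x hx hxe h => by_contra fun hx0 => H x hx hx0 hxe h
  have H₂ : ∀ x, IsIdempotentElem x → nle x e → x * (g⁻¹ * x * g⁻¹⁻¹) = 0 → x = 0 := by
    intro x hx hxe h
    refine H₁ x hx hxe ?_
    rw [inv_inv] at h
    calc x * (g * x * g⁻¹) = g * x * g⁻¹ * x := ((hx.conj g).commute hx).eq.symm
      _ = g * (x * (g⁻¹ * x * g)) * g⁻¹ := by
          simp only [mul_assoc, mul_inv_of_isUnit hg, mul_one]
      _ = 0 := by rw [h, mul_zero', zero_mul']
  have hfix : ∀ f, IsIdempotentElem f → nle f e → g * f * g⁻¹ = f := by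
    intro f hf hfe
    refine nle_antisymm ?_ (nle_conj_of_forall_mul_conj_eq_zero H₁ hf hfe)
    have h := nle_conj (nle_conj_of_forall_mul_conj_eq_zero H₂ hf hfe) g
    rwa [inv_inv, conj_inv_conj hg] at h
  apply he0
  rw [← mul_sigma_eq_zero_of_forall_conj_eq hfund hg he hfix,
    (nle_iff_mul_eq he (isIdempotentElem_sigma hg)).mp hle]

/-- (F3) supplies a non-involution `h` supported in a piece `f` of `σ(g) p` that `g` moves off
itself; if `g` commutes with `h²`, then `σ(h²) ≤ f · g f g⁻¹ = 0`, so `h² = 1`. -/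
theorem sigma_mul_eq_zero_of_forall_commute_sq (hfund : Fundamental S) (h3 : AxF3 S)
    (hg : IsUnit g) (hp : IsIdempotentElem p)
    (H : ∀ h, IsUnit h → nle (sigma h) p → sigma h * (g * sigma h * g⁻¹) = 0 →
      Commute g (h * h)) :
    sigma g * p = 0 := by
  by_contra hE
  have hσg := isIdempotentElem_sigma hg
  obtain ⟨f, hf, hf0, hfE, hfg⟩ := exists_mul_conj_eq_zero hfund hg (isIdempotentElem_mul hσg hp)
    hE (mul_nle_left hσg hp)
  obtain ⟨h, hh, hh2, hhf⟩ := h3 f hf hf0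
  have hcomm : Commute g (h * h) := by
    refine H h hh (nle_trans hhf (nle_trans hfE (mul_nle_right hσg p))) (eq_zero_of_nle_zero ?_)
    rw [← hfg]
    exact nle_mul_mul hhf (nle_conj hhf g)
  have hsq : nle (sigma (h * h)) f := nle_trans (sigma_mul_self_nle hh) hhf
  have hsq' : nle (sigma (h * h)) (g * f * g⁻¹) := by
    have h' := nle_conj hsq g
    rwa [← sigma_conj hg (hh.mul hh), (conj_eq_iff_commute hg).mpr hcomm] at h'
  refine hh2 (eq_one_of_sigma_eq_zero (hh.mul hh) (eq_zero_of_nle_zero ?_))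
  rw [← hfg]
  exact nle_mul (isIdempotentElem_sigma (hh.mul hh)) hf (hf.conj g) hsq hsq'

end Fundamental

section Twist

variable {S : Type u} [BooleanInverseMeetMonoid S] {a e f t : S}

/-- The involution acting as `t` on the `t`-invariant idempotent `e` and as the identity off `e`. -/
def twist (t e : S) : S := bsup (t * e) (bcompl e)

theorem compat_twist (ht : t * t = 1) (he : IsIdempotentElem e) (hte : Commute t e) :
    Compat (t * e) (bcompl e) := by
  have htē := hte.bcompl (isUnit_of_mul_self_eq_one ht) he
  refine Orth.compat ⟨?_, ?_⟩
  · rw [he.bcompl.inv_eq_self, mul_assoc, mul_bcompl he, mul_zero']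
  · rw [mul_inv_rev, he.inv_eq_self, inv_eq_of_mul_eq_one ht ht, mul_assoc, htē.eq,
      ← mul_assoc, mul_bcompl he, zero_mul']

theorem twist_mul_self (ht : t * t = 1) (he : IsIdempotentElem e) (hte : Commute t e) :
    twist t e * twist t e = 1 := by
  have hc := compat_twist ht he hte
  have hte_sq : t * e * (t * e) = e := by
    rw [mul_assoc, ← mul_assoc e, ← hte.eq, mul_assoc, he.eq, ← mul_assoc, ht, one_mul]
  have htē : bcompl e * (t * e) = 0 := by
    rw [← mul_assoc, ← (hte.bcompl (isUnit_of_mul_self_eq_one ht) he).eq, mul_assoc,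
      bcompl_mul he, mul_zero']
  rw [twist, bsup_mul _ hc, mul_bsup _ hc, mul_bsup _ hc, hte_sq, mul_assoc, mul_bcompl he,
    mul_zero', htē, he.bcompl.eq, bsup_zero, zero_bsup, bsup_bcompl he]

theorem twist_mul (he : IsIdempotentElem e) (ht : t * t = 1) (hte : Commute t e) :
    twist t e * e = t * e := by
  rw [twist, bsup_mul _ (compat_twist ht he hte), mul_assoc, he.eq, bcompl_mul he, bsup_zero]

theorem commute_twist (ht : t * t = 1) (he : IsIdempotentElem e) (hte : Commute t e) :
    Commute t (twist t e) :=
  ((Commute.refl t).mul_right hte).bsup (hte.bcompl (isUnit_of_mul_self_eq_one ht) he)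
    (compat_twist ht he hte)

theorem commute_twist_of_isIdempotentElem (ht : t * t = 1) (he : IsIdempotentElem e)
    (hte : Commute t e) (hf : IsIdempotentElem f) (htf : Commute t f) :
    Commute f (twist t e) :=
  (htf.symm.mul_right (hf.commute he)).bsup (hf.commute he.bcompl) (compat_twist ht he hte)

theorem commute_twist_twist (ht : t * t = 1) (he : IsIdempotentElem e) (hte : Commute t e)
    (hf : IsIdempotentElem f) (htf : Commute t f) : Commute (twist t e) (twist t f) := by
  have hτ := commute_twist ht he hte
  refine Commute.bsup ?_ ?_ (compat_twist ht hf htf)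
  · exact hτ.symm.mul_right (commute_twist_of_isIdempotentElem ht he hte hf htf).symm
  · exact (commute_twist_of_isIdempotentElem ht he hte hf.bcompl
      (htf.bcompl (isUnit_of_mul_self_eq_one ht) hf)).symm

theorem phi_twist (ht : t * t = 1) (he : IsIdempotentElem e) (hte : Commute t e)
    (hle : nle e (sigma t)) : phi (twist t e) = bcompl e := by
  have htu := isUnit_of_mul_self_eq_one ht
  have hφ := isIdempotentElem_phi (twist t e)
  have hx := isIdempotentElem_mul hφ he
  refine nle_antisymm ?_ (nle_phi he.bcompl (le_bsup_right (compat_twist ht he hte)))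
  rw [nle_iff_mul_eq hφ he.bcompl]
  refine mul_bcompl_eq_self_of_mul_eq_zero he (eq_zero_of_nle_zero ?_)
  have hxt : nle (phi (twist t e) * e) t := by
    have h := nle_mul_right (phi_nle (twist t e)) e
    rw [twist_mul he ht hte, hte.eq] at h
    exact nle_trans h (mul_nle_right he t)
  rw [← phi_mul_sigma htu]
  exact nle_mul hx (isIdempotentElem_phi t) (isIdempotentElem_sigma htu) (nle_phi hx hxt)
    (nle_trans (mul_nle_right hφ e) hle)

theorem twist_sigma (ht : t * t = 1) : twist t (sigma t) = t := by
  have htu := isUnit_of_mul_self_eq_one ht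
  have hσ := isIdempotentElem_sigma htu
  rw [twist, bcompl_sigma htu]
  conv_rhs => rw [← bsup_mul_mul_bcompl hσ t, bcompl_sigma htu,
    (mul_eq_self_of_nle (isIdempotentElem_phi t) (phi_nle t)).1]

theorem conj_twist (ht : t * t = 1) (he : IsIdempotentElem e) (hte : Commute t e)
    (ha : IsUnit a) (hat : Commute a t) : a * twist t e * a⁻¹ = twist t (a * e * a⁻¹) := by
  rw [twist, conj_bsup ha (compat_twist ht he hte), conj_bcompl ha he, twist]
  congr 1
  rw [← mul_assoc a, hat.eq]
  simp only [mul_assoc]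

theorem twist_mem_Zset (ht : t * t = 1) (he : IsIdempotentElem e) (hte : Commute t e) :
    twist t e ∈ Zset t := by
  have hτ := commute_twist ht he hte
  refine ⟨⟨isUnit_of_mul_self_eq_one (twist_mul_self ht he hte), hτ.eq.symm⟩, twist_mul_self ht he hte, fun a ⟨ha, (hat : Commute a t)⟩ => ?_⟩
  have hta : Commute t (a * e * a⁻¹) :=
    (hat.symm.mul_right hte).mul_right (hat.inv_left_of_isUnit ha).symm
  rw [conj_twist ht he hte ha hat]
  exact commute_twist_twist ht he hte (he.conj a) hta

end Twist

section CommuteZset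

variable {S : Type u} [BooleanInverseMeetMonoid S] {a e f t x : S}

theorem commute_of_forall_commute_Zset (ht : t * t = 1) (hZ : ∀ s ∈ Zset t, Commute a s) :
    Commute a t := by
  have htu := isUnit_of_mul_self_eq_one ht
  have h := hZ _ (twist_mem_Zset ht (isIdempotentElem_sigma htu) (commute_sigma htu))
  rwa [twist_sigma ht] at h

/-- `a` commutes with `twist t e`, hence fixes its fixed-point set `ē`, hence `e`. -/
theorem commute_of_forall_commute_Zset_of_nle_sigma (ht : t * t = 1) (ha : IsUnit a)
    (hZ : ∀ s ∈ Zset t, Commute a s) (he : IsIdempotentElem e) (hte : Commute t e)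
    (hle : nle e (sigma t)) : Commute a e := by
  have h := congrArg phi ((conj_eq_iff_commute ha).mpr (hZ _ (twist_mem_Zset ht he hte)))
  rw [phi_conj ha, phi_twist ht he hte hle] at h
  rw [← conj_eq_iff_commute ha, ← bcompl_bcompl he, conj_bcompl ha he.bcompl, h]

theorem commute_bsup_conj (ht : t * t = 1) (hx : IsIdempotentElem x) :
    Commute t (bsup x (t * x * t⁻¹)) := by
  have htu := isUnit_of_mul_self_eq_one ht
  have hc := compat_of_isIdempotentElem hx (hx.conj t)
  rw [← conj_eq_iff_commute htu, conj_bsup htu hc, conj_conj_of_mul_self_eq_one ht,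
    bsup_comm hc.symm]

theorem bsup_conj_nle_sigma (ht : t * t = 1) (hx : IsIdempotentElem x) (hxσ : nle x (sigma t)) :
    nle (bsup x (t * x * t⁻¹)) (sigma t) := by
  have htu := isUnit_of_mul_self_eq_one ht
  have h := nle_conj hxσ t
  rw [(conj_eq_iff_commute htu).mpr (commute_sigma htu)] at h
  exact bsup_le (compat_of_isIdempotentElem hx (hx.conj t)) hxσ h

theorem conj_nle_bsup_conj (ht : t * t = 1) (ha : IsUnit a)
    (hfix : ∀ m, IsIdempotentElem m → Commute t m → nle m (sigma t) → Commute a m)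
    (hx : IsIdempotentElem x) (hxσ : nle x (sigma t)) :
    nle (a * x * a⁻¹) (bsup x (t * x * t⁻¹)) := by
  have hm := hfix _ (hx.bsup (hx.conj t)) (commute_bsup_conj ht hx) (bsup_conj_nle_sigma ht hx hxσ)
  have h := nle_conj (le_bsup_left (compat_of_isIdempotentElem hx (hx.conj t))) a
  rwa [(conj_eq_iff_commute ha).mpr hm] at h

/-- `f · t f t⁻¹` is `t`-invariant, hence fixed by `a`. -/
theorem mul_conj_eq_zero_of_mul_conj_sq_eq_zero (ht : t * t = 1) (ha : IsUnit a)
    (hfix : ∀ m, IsIdempotentElem m → Commute t m → nle m (sigma t) → Commute a m)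
    (hf : IsIdempotentElem f) (hfσ : nle f (sigma t))
    (hff : f * (a * a * f * (a * a)⁻¹) = 0) : f * (t * f * t⁻¹) = 0 := by
  have htu := isUnit_of_mul_self_eq_one ht
  have hτf := hf.conj t
  have hp := isIdempotentElem_mul hf hτf
  have htp : Commute t (f * (t * f * t⁻¹)) := by
    rw [← conj_eq_iff_commute htu, ← conj_mul_conj htu, conj_conj_of_mul_self_eq_one ht,
      (hτf.commute hf).eq]
  have hap := (conj_eq_iff_commute ha).mpr
    (hfix _ hp htp (nle_trans (mul_nle_left hf hτf) hfσ))
  refine eq_zero_of_conj_nle_self (ha.mul ha) hp hf (mul_nle_left hf hτf) hff ?_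
  rw [conj_mul, hap, hap]
  exact nle_refl _

theorem conj_nle_self_of_conj_nle (ht : t * t = 1) (ha : IsUnit a)
    (hfix : ∀ m, IsIdempotentElem m → Commute t m → nle m (sigma t) → Commute a m)
    (hfτ : f * (t * f * t⁻¹) = 0) (hx : IsIdempotentElem x) (hxf : nle x f)
    (hxσ : nle x (sigma t)) (hax : nle (a * x * a⁻¹) f) : nle (a * x * a⁻¹) x :=
  nle_of_nle_bsup_of_mul_eq_zero (hx.conj a) hx (hx.conj t)
    (conj_nle_bsup_conj ht ha hfix hx hxσ) hax
    (eq_zero_of_nle_zero (hfτ ▸ nle_mul_left f (nle_conj hxf t)))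

theorem conj_nle_conj_of_conj_nle (ht : t * t = 1) (ha : IsUnit a)
    (hfix : ∀ m, IsIdempotentElem m → Commute t m → nle m (sigma t) → Commute a m)
    (hf : IsIdempotentElem f) (hfτ : f * (t * f * t⁻¹) = 0) (hx : IsIdempotentElem x)
    (hxf : nle x f) (hxσ : nle x (sigma t)) (hax : nle (a * x * a⁻¹) (t * f * t⁻¹)) :
    nle (a * x * a⁻¹) (t * x * t⁻¹) := by
  have hτfx : (t * f * t⁻¹) * x = 0 := by
    have h := nle_mul_left (t * f * t⁻¹) hxf
    rw [← (hf.commute (hf.conj t)).eq, hfτ] at h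
    exact eq_zero_of_nle_zero h
  refine nle_of_nle_bsup_of_mul_eq_zero (hx.conj a) (hx.conj t) hx ?_ hax hτfx
  rw [bsup_comm (compat_of_isIdempotentElem (hx.conj t) hx)]
  exact conj_nle_bsup_conj ht ha hfix hx hxσ

theorem bsup_mul_inv_conj_eq_self (ht : t * t = 1) (ha : IsUnit a)
    (hfix : ∀ m, IsIdempotentElem m → Commute t m → nle m (sigma t) → Commute a m)
    (hf : IsIdempotentElem f) (hfσ : nle f (sigma t)) :
    bsup (f * (a⁻¹ * f * a)) (f * (a⁻¹ * (t * f * t⁻¹) * a)) = f := by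
  have hτf := hf.conj t
  have hc := compat_of_isIdempotentElem hf hτf
  have hm := hfix _ (hf.bsup hτf) (commute_bsup_conj ht hf) (bsup_conj_nle_sigma ht hf hfσ)
  have h := conj_bsup (isUnit_inv ha) hc
  rw [inv_inv, inv_conj_of_commute ha hm] at h
  have hle := le_bsup_left hc
  rw [h, nle_iff_mul_eq hf ((hf.conj_inv a).bsup (hτf.conj_inv a))] at hle
  rwa [mul_bsup f ((compat_of_isIdempotentElem (hf.conj_inv a) (hτf.conj_inv a)))] at hle

/-- Since `a` fixes `f ∨ t f t⁻¹ ≥ f`, the idempotent `f` splits into a piece that `a` maps into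
itself and a piece that `a` maps onto its `t`-image; either way `a²` maps it into itself. -/
theorem eq_zero_of_mul_conj_sq_eq_zero (ht : t * t = 1) (ha : IsUnit a) (hat : Commute a t)
    (hfix : ∀ m, IsIdempotentElem m → Commute t m → nle m (sigma t) → Commute a m)
    (hf : IsIdempotentElem f) (hfσ : nle f (sigma t))
    (hff : f * (a * a * f * (a * a)⁻¹) = 0) : f = 0 := by
  have hτf := hf.conj t
  have hfτ := mul_conj_eq_zero_of_mul_conj_sq_eq_zero ht ha hfix hf hfσ hff
  have hdec := bsup_mul_inv_conj_eq_self ht ha hfix hf hfσ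
  have hf₁ := isIdempotentElem_mul hf (hf.conj_inv a)
  have hf₂ := isIdempotentElem_mul hf (hτf.conj_inv a)
  have hf₁f := mul_nle_left hf (hf.conj_inv a)
  have hf₂f := mul_nle_left hf (hτf.conj_inv a)
  set f₁ := f * (a⁻¹ * f * a) with hf₁_def
  set f₂ := f * (a⁻¹ * (t * f * t⁻¹) * a) with hf₂_def
  have h₁ : nle (a * f₁ * a⁻¹) f₁ := by
    refine conj_nle_self_of_conj_nle ht ha hfix hfτ hf₁ hf₁f (nle_trans hf₁f hfσ) ?_
    rw [hf₁_def, ← conj_mul_conj ha, conj_inv_conj ha]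
    exact mul_nle_right (hf.conj a) f
  have h₂ : nle (a * f₂ * a⁻¹) (t * f₂ * t⁻¹) := by
    refine conj_nle_conj_of_conj_nle ht ha hfix hf hfτ hf₂ hf₂f (nle_trans hf₂f hfσ) ?_
    rw [hf₂_def, ← conj_mul_conj ha, conj_inv_conj ha]
    exact mul_nle_right (hf.conj a) _
  have hf₁0 := eq_zero_of_conj_nle_self (ha.mul ha) hf₁ hf hf₁f hff
    (by rw [conj_mul]; exact nle_trans (nle_conj h₁ a) h₁)
  have hf₂0 := eq_zero_of_conj_nle_self (ha.mul ha) hf₂ hf hf₂f hff (by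
    have h := nle_conj h₂ t
    rw [← conj_conj_comm hat, conj_conj_of_mul_self_eq_one ht] at h
    rw [conj_mul]
    exact nle_trans (nle_conj h₂ a) h)
  rw [← hdec, hf₁0, hf₂0, bsup_zero]

end CommuteZset

section Wset

variable {S : Type u} [BooleanInverseMeetMonoid S] {a e g s t x y : S}

theorem mul_eq_zero_of_nle_phi_of_nle_sigma (ht : IsUnit t) (hx : nle x (phi t))
    (hy : nle y (sigma t)) : x * y = 0 :=
  eq_zero_of_nle_zero (phi_mul_sigma ht ▸ nle_mul_mul hx hy)

theorem nle_sigma_of_mul_phi_eq_zero (ht : IsUnit t) (he : IsIdempotentElem e)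
    (h : e * phi t = 0) : nle e (sigma t) := by
  rw [nle_iff_mul_eq he (isIdempotentElem_sigma ht)]
  exact mul_eq_self_of_mul_bcompl_eq_zero (isIdempotentElem_sigma ht) (by rwa [bcompl_sigma ht])

theorem sigma_sq_mul_sigma_eq_zero_of_forall_commute_Zset (hfund : Fundamental S)
    (ht : t * t = 1) (ha : IsUnit a) (hZ : ∀ s ∈ Zset t, Commute a s) :
    sigma (a * a) * sigma t = 0 := by
  have hσ := isIdempotentElem_sigma (ha.mul ha)
  have hσt := isIdempotentElem_sigma (isUnit_of_mul_self_eq_one ht)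
  by_contra hE
  obtain ⟨f, hf, hf0, hfE, hff⟩ := exists_mul_conj_eq_zero hfund (ha.mul ha)
    (isIdempotentElem_mul hσ hσt) hE (mul_nle_left hσ hσt)
  exact hf0 (eq_zero_of_mul_conj_sq_eq_zero ht ha (commute_of_forall_commute_Zset ht hZ)
    (fun m hm htm hmσ => commute_of_forall_commute_Zset_of_nle_sigma ht ha hZ hm htm hmσ) hf
    (nle_trans hfE (mul_nle_right hσ _)) hff)

theorem sigma_nle_sigma_of_mem_Zset (hfund : Fundamental S) (h3 : AxF3 S) (ht : t * t = 1)
    (hs : s ∈ Zset t) : nle (sigma s) (sigma t) := by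
  obtain ⟨⟨hsu, -⟩, hss, hZ⟩ := hs
  have htu := isUnit_of_mul_self_eq_one ht
  refine nle_sigma_of_mul_phi_eq_zero htu (isIdempotentElem_sigma hsu)
    (sigma_mul_eq_zero_of_forall_commute_sq hfund h3 hsu (isIdempotentElem_phi t)
      fun h hh hhφ hhs => ?_)
  have hht : Commute h t := commute_of_sigma_mul_sigma_eq_zero hh htu
    (mul_eq_zero_of_nle_phi_of_nle_sigma htu hhφ (nle_refl _))
  refine commute_mul_self_of_commute_conj hss hh (hZ h ⟨hh, hht.eq⟩) ?_
  refine commute_of_sigma_mul_sigma_eq_zero hh (isUnit_conj hsu hh) ?_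
  rwa [sigma_conj hsu hh]

theorem sigma_nle_sigma_of_mem_Wset (hfund : Fundamental S) (h3 : AxF3 S) (ht : t * t = 1)
    (ha : a ∈ Wset t) : nle (sigma a) (sigma t) := by
  have htu := isUnit_of_mul_self_eq_one ht
  refine nle_sigma_of_mul_phi_eq_zero htu (isIdempotentElem_sigma ha.1)
    (sigma_mul_eq_zero_of_forall_commute_sq hfund h3 ha.1 (isIdempotentElem_phi t)
      fun h hh hhφ _ => ha.2 _ ⟨h, hh, rfl, fun s hs => ?_⟩)
  exact commute_of_sigma_mul_sigma_eq_zero hh hs.1.1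
    (mul_eq_zero_of_nle_phi_of_nle_sigma htu hhφ (sigma_nle_sigma_of_mem_Zset hfund h3 ht hs))

theorem mem_Wset_of_sigma_nle_sigma (hfund : Fundamental S) (ht : t * t = 1) (hg : IsUnit g)
    (hle : nle (sigma g) (sigma t)) : g ∈ Wset t := by
  refine ⟨hg, ?_⟩
  rintro _ ⟨c, hc, rfl, hcZ⟩
  have hσc := isIdempotentElem_sigma (hc.mul hc)
  have hσt := isIdempotentElem_sigma (isUnit_of_mul_self_eq_one ht)
  refine commute_of_sigma_mul_sigma_eq_zero hg (hc.mul hc) (eq_zero_of_nle_zero ?_)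
  rw [← sigma_sq_mul_sigma_eq_zero_of_forall_commute_Zset hfund ht hc hcZ, (hσc.commute hσt).eq]
  exact nle_mul_right hle _

end Wset

end InverseMonoidWithZero

theorem statement19_general [BooleanInverseMeetMonoid S]
    (hfund : Fundamental S) (h3 : AxF3 S)
    (t : S) (htt : t * t = 1) :
    Wset t = {g : S | IsUnit g ∧ nle (sigma g) (sigma t)} := by
  ext g
  exact ⟨fun hg => ⟨hg.1, InverseMonoidWithZero.sigma_nle_sigma_of_mem_Wset hfund h3 htt hg⟩,
    fun ⟨hg, hle⟩ => InverseMonoidWithZero.mem_Wset_of_sigma_nle_sigma hfund htt hg hle⟩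

/-- In a fundamental Boolean inverse ∧-monoid satisfying
(F1), (F2) and (F3), for every non-trivial involution `t` we have
`W_t = U(σ(t)) = {g ∈ U(S) : σ(g) ≤ σ(t)}`. -/
theorem statement19 [BooleanInverseMeetMonoid S]
    (hfund : Fundamental S) (h1 : AxF1 S) (h2 : AxF2 S) (h3 : AxF3 S)
    (t : S) (ht : IsUnit t) (htt : t * t = 1) (hnt : t ≠ 1) :
    Wset t = {g : S | IsUnit g ∧ nle (sigma g) (sigma t)} :=
  statement19_general hfund h3 t htt

end Statement19
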